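/- arXiv:1909.11521 — 6 statements merged into one kernel-verified Lean document; each statement's English description precedes it below -/
import Mathlib

section
/- In a 2-acyclic Cayley frame, for all worlds w and all sets of agents α, β, the intersection of the α-class and β-class of w equals the (α∩β)-class of w: [w]_α ∩ [w]_β = [w]_{α∩β}. -/
/-!
The classes `[w]_α` are the left cosets `w G_α`, so two of them coincide as soon as they meet.
A coset cycle of length 2 is therefore exactly a world `v ∈ [w]_α ∩ [w]_β` outside `[w]_{α∩β}`;
the inclusion `[w]_{α∩β} ⊆ [w]_α ∩ [w]_β` always holds since `G_α` is monotone in `α`.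
-/

/-- The `α`-class (coset) of a world `w` in the Cayley frame given by a group `G`
with generators partitioned among agents by `gen : Γ → Set G`. -/
def cayleyClass {G : Type*} [Group G] {Γ : Type*} (gen : Γ → Set G)
    (α : Set Γ) (w : G) : Set G :=
  {v | w⁻¹ * v ∈ Subgroup.closure (⋃ a ∈ α, gen a)}

section CayleyFrame

open scoped Pointwise

variable {G : Type*} [Group G] {Γ : Type*} (gen : Γ → Set G)

abbrev cayleySubgroup (α : Set Γ) : Subgroup G :=
  Subgroup.closure (⋃ a ∈ α, gen a)

theorem cayleySubgroup_mono {α β : Set Γ} (h : α ⊆ β) :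
    cayleySubgroup gen α ≤ cayleySubgroup gen β :=
  Subgroup.closure_mono (Set.biUnion_subset_biUnion_left h)

theorem cayleyClass_eq_leftCoset (α : Set Γ) (w : G) :
    cayleyClass gen α w = w • (cayleySubgroup gen α : Set G) := by
  ext v
  exact (mem_leftCoset_iff w).symm

variable {gen}

theorem mem_cayleyClass_self (α : Set Γ) (w : G) : w ∈ cayleyClass gen α w := by
  rw [cayleyClass_eq_leftCoset]
  exact mem_own_leftCoset _ w

theorem cayleyClass_mono {α β : Set Γ} (h : α ⊆ β) (w : G) :
    cayleyClass gen α w ⊆ cayleyClass gen β w := by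
  simp only [cayleyClass_eq_leftCoset]
  exact Set.smul_set_mono (cayleySubgroup_mono gen h)

theorem cayleyClass_eq_iff {α : Set Γ} {w v : G} :
    cayleyClass gen α w = cayleyClass gen α v ↔ v ∈ cayleyClass gen α w := by
  rw [cayleyClass_eq_leftCoset, cayleyClass_eq_leftCoset, mem_leftCoset_iff]
  exact leftCoset_eq_iff (cayleySubgroup gen α)

theorem cayleyClass_inter_eq_empty_iff {α : Set Γ} {w v : G} :
    cayleyClass gen α w ∩ cayleyClass gen α v = ∅ ↔ v ∉ cayleyClass gen α w := by
  refine ⟨fun h hv => h.subset ⟨hv, mem_cayleyClass_self α v⟩, fun hv => ?_⟩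
  refine Set.eq_empty_of_forall_notMem fun u ⟨hwu, hvu⟩ => hv ?_
  rw [← cayleyClass_eq_iff, cayleyClass_eq_iff.2 hwu, cayleyClass_eq_iff.2 hvu]

end CayleyFrame

theorem stmt1_general (G : Type*) [Group G] (Γ : Type*) (gen : Γ → Set G) :
    (¬ ∃ (w v : G) (α β : Set Γ),
        cayleyClass gen α w = cayleyClass gen α v ∧
        cayleyClass gen β w = cayleyClass gen β v ∧
        cayleyClass gen (α ∩ β) w ∩ cayleyClass gen (α ∩ β) v = ∅) ↔
    (∀ (w : G) (α β : Set Γ),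
        cayleyClass gen α w ∩ cayleyClass gen β w = cayleyClass gen (α ∩ β) w) := by
  simp only [cayleyClass_eq_iff, cayleyClass_inter_eq_empty_iff]
  constructor
  · intro hacyclic w α β
    refine subset_antisymm (fun v ⟨hα, hβ⟩ => ?_) <|
      Set.subset_inter (cayleyClass_mono Set.inter_subset_left w)
        (cayleyClass_mono Set.inter_subset_right w)
    by_contra hv
    exact hacyclic ⟨w, v, α, β, hα, hβ, hv⟩
  · rintro h ⟨w, v, α, β, hα, hβ, hv⟩
    exact hv (h w α β ▸ ⟨hα, hβ⟩)

/-- A Cayley frame is 2-acyclic (contains no coset cycle of length 2) if and only if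
for all worlds `w` and sets of agents `α, β`: `[w]_α ∩ [w]_β = [w]_{α∩β}`. -/
theorem stmt1 (G : Type*) [Group G] (Γ : Type*) (gen : Γ → Set G)
    (hinv : ∀ a : Γ, ∀ e ∈ gen a, e ≠ 1 ∧ e ^ 2 = 1)
    (hgen : Subgroup.closure (⋃ a : Γ, gen a) = ⊤) :
    (¬ ∃ (w v : G) (α β : Set Γ),
        cayleyClass gen α w = cayleyClass gen α v ∧
        cayleyClass gen β w = cayleyClass gen β v ∧
        cayleyClass gen (α ∩ β) w ∩ cayleyClass gen (α ∩ β) v = ∅) ↔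
    (∀ (w : G) (α β : Set Γ),
        cayleyClass gen α w ∩ cayleyClass gen β w = cayleyClass gen (α ∩ β) w) :=
  stmt1_general G Γ gen
end

section
/- In a 2-acyclic Cayley frame, the minimal connecting sets of agents satisfy a triangle inequality: agt(u,w) ⊆ agt(u,v) ∪ agt(v,w) for all worlds u, v, w. -/
def cayleyRel {G : Type*} [Group G] {Γ : Type*} (gen : Γ → Set G)
    (α : Set Γ) (w v : G) : Prop :=
  w⁻¹ * v ∈ Subgroup.closure (⋃ a ∈ α, gen a)

theorem cayleyRel.trans {G : Type*} [Group G] {Γ : Type*} {gen : Γ → Set G} {α : Set Γ}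
    {u v w : G} (huv : cayleyRel gen α u v) (hvw : cayleyRel gen α v w) :
    cayleyRel gen α u w := by
  have h := mul_mem huv hvw
  rwa [mul_assoc, mul_inv_cancel_left] at h

theorem stmt3_general (G : Type*) [Group G] (Γ : Type*) (gen : Γ → Set G)
    (agt : G → G → Set Γ)
    (hagt : ∀ (w v : G) (β : Set Γ), cayleyRel gen β w v ↔ agt w v ⊆ β)
    (u v w : G) :
    agt u w ⊆ agt u v ∪ agt v w := by
  rw [← hagt]
  exact ((hagt u v _).mpr Set.subset_union_left).trans ((hagt v w _).mpr Set.subset_union_right)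

/-- Triangle inequality for the minimal connecting sets of agents in a 2-acyclic
Cayley frame: `agt(u,w) ⊆ agt(u,v) ∪ agt(v,w)`. -/
theorem stmt3 (G : Type*) [Group G] (Γ : Type*) (gen : Γ → Set G)
    (hinv : ∀ a : Γ, ∀ e ∈ gen a, e ≠ 1 ∧ e ^ 2 = 1)
    (hgen : Subgroup.closure (⋃ a : Γ, gen a) = ⊤)
    (h2 : ∀ (w v : G) (α β : Set Γ),
      cayleyRel gen α w v → cayleyRel gen β w v → cayleyRel gen (α ∩ β) w v)
    (agt : G → G → Set Γ)
    (hagt : ∀ (w v : G) (β : Set Γ), cayleyRel gen β w v ↔ agt w v ⊆ β)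
    (u v w : G) :
    agt u w ⊆ agt u v ∪ agt v w :=
  stmt3_general G Γ gen agt hagt u v w
end

section
/- In a 2-acyclic Cayley frame, for any worlds w, v, any agent a ∉ agt(w,v), and any v' ≠ v with (v,v') ∈ R_{{a}}: agt(w,v') = agt(w,v) ∪ {a}. -/
namespace cayleyRel

variable {G : Type*} [Group G] {Γ : Type*} {gen : Γ → Set G}

theorem mono {α β : Set Γ} (hαβ : α ⊆ β) {w v : G} (h : cayleyRel gen α w v) :
    cayleyRel gen β w v :=
  Subgroup.closure_mono (Set.biUnion_subset_biUnion_left hαβ) h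

theorem symm {α : Set Γ} {w v : G} (h : cayleyRel gen α w v) : cayleyRel gen α v w := by
  simpa [cayleyRel, mul_inv_rev] using inv_mem h

theorem trans_s4 {α β : Set Γ} {w v u : G} (hwv : cayleyRel gen α w v)
    (hvu : cayleyRel gen β v u) : cayleyRel gen (α ∪ β) w u := by
  have := mul_mem (hwv.mono Set.subset_union_left) (hvu.mono Set.subset_union_right)
  simpa [cayleyRel, mul_assoc] using this

theorem eq_of_empty {w v : G} (h : cayleyRel gen (∅ : Set Γ) w v) : w = v := by
  simpa [cayleyRel, inv_mul_eq_one] using h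

end cayleyRel

theorem mem_of_cayleyRel_singleton {G : Type*} [Group G] {Γ : Type*} {gen : Γ → Set G}
    (h2 : ∀ (w v : G) (α β : Set Γ),
      cayleyRel gen α w v → cayleyRel gen β w v → cayleyRel gen (α ∩ β) w v)
    {α β : Set Γ} {w v v' : G} {a : Γ} (ha : a ∉ α) (hwv : cayleyRel gen α w v)
    (hwv' : cayleyRel gen β w v') (hne : v' ≠ v) (hr : cayleyRel gen {a} v v') : a ∈ β := by
  by_contra haβ
  have hdisj : ({a} : Set Γ) ∩ (α ∪ β) = ∅ :=
    Set.singleton_inter_eq_empty.2 fun h => h.elim ha haβ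
  have := h2 v v' _ _ hr (hwv.symm.trans_s4 hwv')
  rw [hdisj] at this
  exact hne this.eq_of_empty.symm

theorem stmt4_general (G : Type*) [Group G] (Γ : Type*) (gen : Γ → Set G)
    (h2 : ∀ (w v : G) (α β : Set Γ),
      cayleyRel gen α w v → cayleyRel gen β w v → cayleyRel gen (α ∩ β) w v)
    (agt : G → G → Set Γ)
    (hagt : ∀ (w v : G) (β : Set Γ), cayleyRel gen β w v ↔ agt w v ⊆ β)
    (w v v' : G) (a : Γ)
    (ha : a ∉ agt w v) (hne : v' ≠ v) (hr : cayleyRel gen {a} v v') :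
    agt w v' = agt w v ∪ {a} := by
  have hwv : cayleyRel gen (agt w v) w v := (hagt w v _).2 subset_rfl
  have hwv' : cayleyRel gen (agt w v') w v' := (hagt w v' _).2 subset_rfl
  refine subset_antisymm ((hagt w v' _).1 (hwv.trans_s4 hr)) (Set.union_subset ?_ ?_)
  · intro x hx
    exact ((hagt w v _).1 (hwv'.trans_s4 hr.symm) hx).resolve_right fun hxa => ha (hxa ▸ hx)
  · exact Set.singleton_subset_iff.2 (mem_of_cayleyRel_singleton h2 ha hwv hwv' hne hr)

/-- In a 2-acyclic Cayley frame, for any worlds `w, v`, any agent `a ∉ agt(w,v)`,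
and any `v' ≠ v` with `(v,v') ∈ R_{{a}}`: `agt(w,v') = agt(w,v) ∪ {a}`. -/
theorem stmt4 (G : Type*) [Group G] (Γ : Type*) (gen : Γ → Set G)
    (hinv : ∀ a : Γ, ∀ e ∈ gen a, e ≠ 1 ∧ e ^ 2 = 1)
    (hgen : Subgroup.closure (⋃ a : Γ, gen a) = ⊤)
    (h2 : ∀ (w v : G) (α β : Set Γ),
      cayleyRel gen α w v → cayleyRel gen β w v → cayleyRel gen (α ∩ β) w v)
    (agt : G → G → Set Γ)
    (hagt : ∀ (w v : G) (β : Set Γ), cayleyRel gen β w v ↔ agt w v ⊆ β)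
    (w v v' : G) (a : Γ)
    (ha : a ∉ agt w v) (hne : v' ≠ v) (hr : cayleyRel gen {a} v v') :
    agt w v' = agt w v ∪ {a} :=
  stmt4_general G Γ gen h2 agt hagt w v v' a ha hne hr
end

section
/- In a 2-acyclic Cayley frame, for any worlds w, v and any agent a ∈ agt(w,v), there is at most one world v' in the {a}-class of v such that agt(w,v') = agt(w,v) \ {a}. -/
/-! Both `v'` and `v''` are `{a}`-related to `v`, and both are `(agt w v \ {a})`-related to `w`,
hence to each other. The two agent sets are disjoint, so 2-acyclicity relates `v'` and `v''`
through the empty set of agents, i.e. `v' = v''`. -/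

namespace cayleyRel

variable {G Γ : Type*} [Group G] {gen : Γ → Set G} {α : Set Γ} {x y z : G}

theorem symm_s5 (h : cayleyRel gen α x y) : cayleyRel gen α y x := by
  simpa [cayleyRel] using inv_mem h

theorem trans_s5 (hxy : cayleyRel gen α x y) (hyz : cayleyRel gen α y z) :
    cayleyRel gen α x z := by
  simpa [cayleyRel, mul_assoc] using mul_mem hxy hyz

theorem empty_iff : cayleyRel gen ∅ x y ↔ x = y := by
  simp [cayleyRel, inv_mul_eq_one]

theorem eq_of_disjoint {β : Set Γ}
    (h2 : ∀ (w v : G) (α β : Set Γ),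
      cayleyRel gen α w v → cayleyRel gen β w v → cayleyRel gen (α ∩ β) w v)
    (hα : cayleyRel gen α x y) (hβ : cayleyRel gen β x y) (hαβ : Disjoint α β) : x = y := by
  simpa [hαβ.inter_eq, empty_iff] using h2 x y α β hα hβ

end cayleyRel

theorem stmt5_general (G : Type*) [Group G] (Γ : Type*) (gen : Γ → Set G)
    (h2 : ∀ (w v : G) (α β : Set Γ),
      cayleyRel gen α w v → cayleyRel gen β w v → cayleyRel gen (α ∩ β) w v)
    (agt : G → G → Set Γ)
    (hagt : ∀ (w v : G) (β : Set Γ), cayleyRel gen β w v ↔ agt w v ⊆ β)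
    (w v : G) (a : Γ) :
    ∀ v' v'' : G, cayleyRel gen {a} v v' → cayleyRel gen {a} v v'' →
      agt w v' = agt w v \ {a} → agt w v'' = agt w v \ {a} → v' = v'' := by
  intro v' v'' hv' hv'' hagt' hagt''
  have h_single : cayleyRel gen {a} v' v'' := hv'.symm_s5.trans_s5 hv''
  have h_rest : cayleyRel gen (agt w v \ {a}) v' v'' :=
    ((hagt w v' _).2 hagt'.le).symm_s5.trans_s5 ((hagt w v'' _).2 hagt''.le)
  exact cayleyRel.eq_of_disjoint h2 h_single h_rest Set.disjoint_sdiff_right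

/-- In a 2-acyclic Cayley frame, for any worlds `w, v` and any agent `a ∈ agt(w,v)`,
there is at most one world `v'` in the `{a}`-class of `v` with
`agt(w,v') = agt(w,v) \ {a}`. -/
theorem stmt5 (G : Type*) [Group G] (Γ : Type*) (gen : Γ → Set G)
    (hinv : ∀ a : Γ, ∀ e ∈ gen a, e ≠ 1 ∧ e ^ 2 = 1)
    (hgen : Subgroup.closure (⋃ a : Γ, gen a) = ⊤)
    (h2 : ∀ (w v : G) (α β : Set Γ),
      cayleyRel gen α w v → cayleyRel gen β w v → cayleyRel gen (α ∩ β) w v)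
    (agt : G → G → Set Γ)
    (hagt : ∀ (w v : G) (β : Set Γ), cayleyRel gen β w v ↔ agt w v ⊆ β)
    (w v : G) (a : Γ) (ha : a ∈ agt w v) :
    ∀ v' v'' : G, cayleyRel gen {a} v v' → cayleyRel gen {a} v v'' →
      agt w v' = agt w v \ {a} → agt w v'' = agt w v \ {a} → v' = v'' :=
  stmt5_general G Γ gen h2 agt hagt w v a
end

section
/- For any S5 Kripke structures M and N with distinguished worlds w and v: M,w is bisimilar to N,v (with respect to the relations R_a, a ∈ Γ) if and only if the CK-expansions M^CK,w and N^CK,v are bisimilar (with respect to all relations R_α, α ⊆ Γ). -/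
/-- `Z` is a bisimulation between Kripke structures with accessibility relations
indexed by `τ` and propositions indexed by `I`. -/
def IsBisim {W V τ I : Type*} (R : τ → W → W → Prop) (R' : τ → V → V → Prop)
    (P : I → W → Prop) (P' : I → V → Prop) (Z : W → V → Prop) : Prop :=
  ∀ w v, Z w v →
    (∀ i, P i w ↔ P' i v) ∧
    (∀ t w', R t w w' → ∃ v', R' t v v' ∧ Z w' v') ∧
    (∀ t v', R' t v v' → ∃ w', R t w w' ∧ Z w' v')

/-- Pointed bisimilarity. -/
def Bisimilar {W V τ I : Type*} (R : τ → W → W → Prop) (R' : τ → V → V → Prop)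
    (P : I → W → Prop) (P' : I → V → Prop) (w : W) (v : V) : Prop :=
  ∃ Z : W → V → Prop, IsBisim R R' P P' Z ∧ Z w v

/-!
A bisimulation `Z` for the relations `R_a` is already one for the CK-expansion: a path of
`R_a`-steps (`a ∈ α`) from `w` is matched step by step by a path of `R'_a`-steps from `v`.
Conversely, for S5 relations the closure `R_{a}` of a single relation is `R_a` itself, so a
bisimulation of the CK-expansions restricts, along `a ↦ {a}`, to one for the original relations.
-/

open Relation

def ckExpansion {Γ W : Type*} (R : Γ → W → W → Prop) (α : Set Γ) : W → W → Prop :=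
  ReflTransGen fun x y => ∃ a ∈ α, R a x y

theorem ckExpansion_singleton {Γ W : Type*} {R : Γ → W → W → Prop} {a : Γ}
    (h : Equivalence (R a)) : ckExpansion R {a} = R a := by
  have : Std.Refl (R a) := ⟨h.refl⟩
  have : IsTrans W (R a) := ⟨fun _ _ _ => h.trans⟩
  have hunion : (fun x y => ∃ b ∈ ({a} : Set Γ), R b x y) = R a := by
    ext x y
    simp
  rw [ckExpansion, hunion, reflTransGen_eq_self]

theorem Relation.ReflTransGen.exists_of_forth {W V : Type*} {r : W → W → Prop}
    {r' : V → V → Prop} {Z : W → V → Prop}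
    (hforth : ∀ w v w', Z w v → r w w' → ∃ v', r' v v' ∧ Z w' v')
    {w w' : W} {v : V} (hwv : Z w v) (h : ReflTransGen r w w') :
    ∃ v', ReflTransGen r' v v' ∧ Z w' v' := by
  induction h with
  | refl => exact ⟨v, .refl, hwv⟩
  | tail _ hstep ih =>
    obtain ⟨v₁, hv₁, hZ₁⟩ := ih
    obtain ⟨v', hv', hZ'⟩ := hforth _ _ _ hZ₁ hstep
    exact ⟨v', hv₁.tail hv', hZ'⟩

namespace IsBisim

variable {W V τ I : Type*} {R : τ → W → W → Prop} {R' : τ → V → V → Prop}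
  {P : I → W → Prop} {P' : I → V → Prop} {Z : W → V → Prop}

theorem flip (h : IsBisim R R' P P' Z) : IsBisim R' R P' P (flip Z) := fun v w hvw =>
  let ⟨hP, hforth, hback⟩ := h w v hvw
  ⟨fun i => (hP i).symm, hback, hforth⟩

theorem comp {σ : Type*} (h : IsBisim R R' P P' Z) (f : σ → τ) :
    IsBisim (R ∘ f) (R' ∘ f) P P' Z := fun w v hwv =>
  let ⟨hP, hforth, hback⟩ := h w v hwv
  ⟨hP, fun s => hforth (f s), fun s => hback (f s)⟩

theorem ckExpansion_forth (h : IsBisim R R' P P' Z) {w : W} {v : V} (hwv : Z w v)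
    (α : Set τ) (w' : W) (hw' : ckExpansion R α w w') :
    ∃ v', ckExpansion R' α v v' ∧ Z w' v' :=
  hw'.exists_of_forth (fun _ _ _ hZ ⟨a, ha, hstep⟩ =>
    let ⟨v', hv', hZ'⟩ := (h _ _ hZ).2.1 a _ hstep
    ⟨v', ⟨a, ha, hv'⟩, hZ'⟩) hwv

theorem ckExpansion (h : IsBisim R R' P P' Z) :
    IsBisim (ckExpansion R) (ckExpansion R') P P' Z := fun _ _ hwv =>
  ⟨(h _ _ hwv).1, h.ckExpansion_forth hwv, h.flip.ckExpansion_forth hwv⟩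

theorem of_ckExpansion (hR : ∀ a, Equivalence (R a)) (hR' : ∀ a, Equivalence (R' a))
    (h : IsBisim (_root_.ckExpansion R) (_root_.ckExpansion R') P P' Z) :
    IsBisim R R' P P' Z := by
  have hR_eq : _root_.ckExpansion R ∘ (fun a => {a}) = R :=
    funext fun a => ckExpansion_singleton (hR a)
  have hR'_eq : _root_.ckExpansion R' ∘ (fun a => {a}) = R' :=
    funext fun a => ckExpansion_singleton (hR' a)
  simpa only [hR_eq, hR'_eq] using h.comp fun a => {a}

end IsBisim

theorem bisimilar_ckExpansion_iff {Γ I W V : Type*} {R : Γ → W → W → Prop}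
    {R' : Γ → V → V → Prop} {P : I → W → Prop} {P' : I → V → Prop}
    (hR : ∀ a, Equivalence (R a)) (hR' : ∀ a, Equivalence (R' a)) {w : W} {v : V} :
    Bisimilar (ckExpansion R) (ckExpansion R') P P' w v ↔ Bisimilar R R' P P' w v :=
  ⟨fun ⟨Z, hZ, hwv⟩ => ⟨Z, hZ.of_ckExpansion hR hR', hwv⟩,
    fun ⟨Z, hZ, hwv⟩ => ⟨Z, hZ.ckExpansion, hwv⟩⟩

/-- For S5 Kripke structures `M, w` and `N, v`: bisimilarity w.r.t. the relations
`R_a`, `a ∈ Γ`, holds iff the CK-expansions (with `R_α` the reflexive-transitive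
closure of `⋃_{a∈α} R_a` for every `α ⊆ Γ`) are bisimilar. -/
theorem stmt11 (Γ I W V : Type*)
    (R : Γ → W → W → Prop) (R' : Γ → V → V → Prop)
    (P : I → W → Prop) (P' : I → V → Prop)
    (hR : ∀ a, Equivalence (R a)) (hR' : ∀ a, Equivalence (R' a))
    (w : W) (v : V) :
    Bisimilar R R' P P' w v ↔
      Bisimilar
        (fun α : Set Γ => Relation.ReflTransGen fun x y => ∃ a ∈ α, R a x y)
        (fun α : Set Γ => Relation.ReflTransGen fun x y => ∃ a ∈ α, R' a x y)
        P P' w v :=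
  (bisimilar_ckExpansion_iff hR hR').symm
end

section
/- In a 2-acyclic Cayley frame, for worlds w₁,…,w_k, the set of common cosets ⋂ᵢ ⟦wᵢ⟧ (when nonempty) has a least element: there exists α₀ ⊆ Γ such that for all α ⊆ Γ, [w₁]_α ∈ ⋂ᵢ ⟦wᵢ⟧ if and only if α₀ ⊆ α. -/
/-- The dual hyperedge of a world: the set of all its cosets. -/
def dualEdge {G : Type*} [Group G] {Γ : Type*} (gen : Γ → Set G) (w : G) :
    Set (Set G) :=
  {c | ∃ α : Set Γ, c = cayleyClass gen α w}

/-!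
The common cosets `⋂ᵢ ⟦wᵢ⟧` of the form `[w₁]_α` are exactly those with `w₁⁻¹ wᵢ ∈ G_α` for
all `i`. This family of agent sets is upward closed, and 2-acyclicity at the identity says
`G_{α ∩ β} = G_α ⊓ G_β`, so it is also closed under intersection. A nonempty family of subsets
of a finite set with these two properties is the principal filter of its intersection.
-/

lemma IsUpperSet.eq_Ici_sInf {L : Type*} [CompleteLattice L] {s : Set L} (hup : IsUpperSet s)
    (hinf : InfClosed s) (hfin : s.Finite) (hne : s.Nonempty) : s = Set.Ici (sInf s) := by
  ext a
  exact ⟨fun ha => sInf_le ha,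
    fun ha => hup ha (hinf.sInf_mem_of_nonempty hfin hne subset_rfl)⟩

namespace CayleyFrame

variable {G : Type*} [Group G] {Γ : Type*} (gen : Γ → Set G)

/-- The paper's `G_α`. -/
def agentSubgroup (α : Set Γ) : Subgroup G :=
  Subgroup.closure (⋃ a ∈ α, gen a)

def IsTwoAcyclic : Prop :=
  ∀ (w : G) (α β : Set Γ),
    cayleyClass gen α w ∩ cayleyClass gen β w = cayleyClass gen (α ∩ β) w

def commonCosetAgents {ι : Type*} (w₀ : G) (w : ι → G) : Set (Set Γ) :=
  {α | ∀ i, cayleyClass gen α w₀ ∈ dualEdge gen (w i)}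

variable {gen}

lemma mem_cayleyClass {α : Set Γ} {w v : G} :
    v ∈ cayleyClass gen α w ↔ w⁻¹ * v ∈ agentSubgroup gen α :=
  Iff.rfl

lemma agentSubgroup_mono {α β : Set Γ} (h : α ⊆ β) : agentSubgroup gen α ≤ agentSubgroup gen β :=
  Subgroup.closure_mono (Set.biUnion_subset_biUnion_left h)

lemma self_mem_cayleyClass (α : Set Γ) (w : G) : w ∈ cayleyClass gen α w := by
  simp [mem_cayleyClass, one_mem]

lemma cayleyClass_eq_of_mem {α : Set Γ} {w v : G} (h : v ∈ cayleyClass gen α w) :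
    cayleyClass gen α v = cayleyClass gen α w := by
  ext u
  rw [mem_cayleyClass] at h
  simp only [mem_cayleyClass]
  constructor
  · intro hu
    simpa [mul_assoc] using mul_mem h hu
  · intro hu
    simpa [mul_assoc] using mul_mem (inv_mem h) hu

lemma cayleyClass_mem_dualEdge_iff {α : Set Γ} {w v : G} :
    cayleyClass gen α w ∈ dualEdge gen v ↔ w⁻¹ * v ∈ agentSubgroup gen α := by
  constructor
  · rintro ⟨β, hβ⟩
    rw [← mem_cayleyClass, hβ]
    exact self_mem_cayleyClass β v
  · intro h
    exact ⟨α, (cayleyClass_eq_of_mem h).symm⟩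

lemma IsTwoAcyclic.agentSubgroup_inter (h2 : IsTwoAcyclic gen) (α β : Set Γ) :
    agentSubgroup gen (α ∩ β) = agentSubgroup gen α ⊓ agentSubgroup gen β := by
  ext g
  have := Set.ext_iff.mp (h2 1 α β) g
  simpa [mem_cayleyClass, Subgroup.mem_inf] using this.symm

lemma commonCosetAgents_eq {ι : Type*} (w₀ : G) (w : ι → G) :
    commonCosetAgents gen w₀ w = {α | ∀ i, w₀⁻¹ * w i ∈ agentSubgroup gen α} := by
  simp only [commonCosetAgents, cayleyClass_mem_dualEdge_iff]

lemma isUpperSet_commonCosetAgents {ι : Type*} (w₀ : G) (w : ι → G) :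
    IsUpperSet (commonCosetAgents gen w₀ w) := by
  rw [commonCosetAgents_eq]
  exact fun _ _ hαβ hα i => agentSubgroup_mono hαβ (hα i)

lemma IsTwoAcyclic.infClosed_commonCosetAgents (h2 : IsTwoAcyclic gen) {ι : Type*} (w₀ : G)
    (w : ι → G) : InfClosed (commonCosetAgents gen w₀ w) := by
  rw [commonCosetAgents_eq]
  intro α hα β hβ i
  change _ ∈ agentSubgroup gen (α ∩ β)
  rw [h2.agentSubgroup_inter]
  exact ⟨hα i, hβ i⟩

end CayleyFrame

open CayleyFrame in
theorem stmt17_general (G : Type*) [Group G] (Γ : Type*) [Finite Γ] (gen : Γ → Set G)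
    (h2 : ∀ (w : G) (α β : Set Γ),
      cayleyClass gen α w ∩ cayleyClass gen β w = cayleyClass gen (α ∩ β) w)
    (k : ℕ) (hk : 0 < k) (w : Fin k → G)
    (hcom : ∃ c : Set G, ∀ i, c ∈ dualEdge gen (w i)) :
    ∃ α₀ : Set Γ, ∀ α : Set Γ,
      (∀ i, cayleyClass gen α (w ⟨0, hk⟩) ∈ dualEdge gen (w i)) ↔ α₀ ⊆ α := by
  set S := commonCosetAgents gen (w ⟨0, hk⟩) w
  have hne : S.Nonempty := by
    obtain ⟨c, hc⟩ := hcom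
    obtain ⟨β, rfl⟩ := hc ⟨0, hk⟩
    exact ⟨β, hc⟩
  have hS : S = Set.Ici (sInf S) :=
    (isUpperSet_commonCosetAgents _ w).eq_Ici_sInf
      ((show IsTwoAcyclic gen from h2).infClosed_commonCosetAgents _ w) (Set.toFinite S) hne
  exact ⟨sInf S, fun α => Set.ext_iff.mp hS α⟩

/-- In a 2-acyclic Cayley frame, for worlds `w₁,…,w_k` whose dual hyperedges have a
common element, the set of common cosets `⋂ᵢ ⟦wᵢ⟧` has a least element: there is
`α₀ ⊆ Γ` such that for all `α`, `[w₁]_α ∈ ⋂ᵢ ⟦wᵢ⟧` iff `α₀ ⊆ α`. -/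
theorem stmt17 (G : Type*) [Group G] (Γ : Type*) [Finite Γ] (gen : Γ → Set G)
    (hinv : ∀ a : Γ, ∀ e ∈ gen a, e ≠ 1 ∧ e ^ 2 = 1)
    (hgen : Subgroup.closure (⋃ a : Γ, gen a) = ⊤)
    (h2 : ∀ (w : G) (α β : Set Γ),
      cayleyClass gen α w ∩ cayleyClass gen β w = cayleyClass gen (α ∩ β) w)
    (k : ℕ) (hk : 0 < k) (w : Fin k → G)
    (hcom : ∃ c : Set G, ∀ i, c ∈ dualEdge gen (w i)) :
    ∃ α₀ : Set Γ, ∀ α : Set Γ,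
      (∀ i, cayleyClass gen α (w ⟨0, hk⟩) ∈ dualEdge gen (w i)) ↔ α₀ ⊆ α :=
  stmt17_general G Γ gen h2 k hk w hcom
end
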